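/- arXiv:1403.8086 — 4 statements merged into one kernel-verified Lean document; each statement's English description precedes it below -/
import Mathlib

section
/- Let H be a simple graph on h vertices and let G be a simple graph that does not contain H as a minor. Then for every radius R ∈ ℕ, the VC-dimension of the ball system of radius R of G is at most h − 1. Equivalently (contrapositive): if the ball system of radius R of G shatters a set of h vertices, then G contains H as a minor. -/
open SimpleGraph

section Helpers

variable {V : Type*} {G : SimpleGraph V}


/-- Triangle inequality for graph distance, assuming the two legs are genuine. -/
lemma dist_tri {u v w : V} (h1 : G.Reachable u v) (h2 : G.Reachable v w) :
    G.dist u w ≤ G.dist u v + G.dist v w := by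
  obtain ⟨p, hp⟩ := h1.exists_walk_length_eq_dist
  obtain ⟨q, hq⟩ := h2.exists_walk_length_eq_dist
  rw [← hp, ← hq, ← SimpleGraph.Walk.length_append]
  exact SimpleGraph.dist_le _

lemma reachable_of_mem_support {c y z : V} (p : G.Walk c y) (hz : z ∈ p.support) :
    G.Reachable c z ∧ G.Reachable z y := by
  classical
  exact ⟨⟨p.takeUntil z hz⟩, ⟨p.dropUntil z hz⟩⟩

/-- Facts about shortest walks. -/
lemma shortest_facts : ∀ {c y : V} (p : G.Walk c y), p.length = G.dist c y →
    (∀ z ∈ p.support, G.dist c z + G.dist z y = G.dist c y) ∧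
    (∀ d ∈ p.darts, G.dist d.fst y = G.dist d.snd y + 1) := by
  intro c y p
  induction p with
  | nil =>
    intro _
    refine ⟨?_, by simp⟩
    intro z hz
    simp only [SimpleGraph.Walk.support_nil, List.mem_singleton] at hz
    subst hz
    simp [SimpleGraph.dist_self]
  | @cons c c' y h q ih =>
    intro hlen
    have hq_reach : G.Reachable c' y := ⟨q⟩
    have hcy_le : G.dist c y ≤ G.dist c' y + 1 := by
      obtain ⟨q', hq'⟩ := hq_reach.exists_walk_length_eq_dist
      calc G.dist c y ≤ (SimpleGraph.Walk.cons h q').length := SimpleGraph.dist_le _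
        _ = q'.length + 1 := by simp [SimpleGraph.Walk.length_cons]
        _ = G.dist c' y + 1 := by rw [hq']
    have hql : q.length = G.dist c' y := by
      have h1 : G.dist c' y ≤ q.length := SimpleGraph.dist_le _
      have h2 : q.length + 1 = G.dist c y := by simpa [SimpleGraph.Walk.length_cons] using hlen
      omega
    obtain ⟨ihsum, ihdart⟩ := ih hql
    have hstep : G.dist c y = G.dist c' y + 1 := by
      have h2 : q.length + 1 = G.dist c y := by simpa [SimpleGraph.Walk.length_cons] using hlen
      omega
    constructor
    · intro z hz
      rw [SimpleGraph.Walk.support_cons, List.mem_cons] at hz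
      rcases hz with rfl | hz
      · simp [SimpleGraph.dist_self]
      · have hsum := ihsum z hz
        have hr := reachable_of_mem_support q hz
        have h3 : G.dist c z ≤ 1 + G.dist c' z := by
          obtain ⟨q', hq'⟩ := hr.1.exists_walk_length_eq_dist
          calc G.dist c z ≤ (SimpleGraph.Walk.cons h q').length := SimpleGraph.dist_le _
            _ = 1 + G.dist c' z := by simp [SimpleGraph.Walk.length_cons, hq']; omega
        have h4 : G.dist c y ≤ G.dist c z + G.dist z y :=
          dist_tri (h.reachable.trans hr.1) hr.2
        omega
    · intro d hd
      rw [SimpleGraph.Walk.darts_cons, List.mem_cons] at hd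
      rcases hd with rfl | hd
      · simpa using hstep
      · exact ihdart d hd


lemma walk_all_not {P : V → Prop} : ∀ {a b : V} (p : G.Walk a b),
    (∀ d ∈ p.darts, P d.snd → P d.fst) → ¬ P a → ∀ z ∈ p.support, ¬ P z := by
  intro a b p
  induction p with
  | nil =>
    intro _ ha z hz
    simp only [SimpleGraph.Walk.support_nil, List.mem_singleton] at hz
    subst hz; exact ha
  | @cons a a' b h q ih =>
    intro hmono ha z hz
    have ha' : ¬ P a' := fun hPa' => ha (hmono ⟨(a,a'),h⟩ (by simp [SimpleGraph.Walk.darts_cons]) hPa')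
    rw [SimpleGraph.Walk.support_cons, List.mem_cons] at hz
    rcases hz with rfl | hz
    · exact ha
    · exact ih (fun d hd => hmono d (by simp [SimpleGraph.Walk.darts_cons, hd])) ha' z hz

/-- Splitting a walk along a predicate that can only turn off. -/
lemma walk_split {P : V → Prop} : ∀ {a b : V} (p : G.Walk a b),
    (∀ d ∈ p.darts, P d.snd → P d.fst) → P a → ¬ P b →
    ∃ (u v : V) (q1 : G.Walk a u) (q2 : G.Walk v b), G.Adj u v ∧
      (∀ z ∈ q1.support, P z) ∧ (∀ z ∈ q2.support, ¬ P z) ∧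
      (∀ z ∈ q1.support, z ∈ p.support) ∧ (∀ z ∈ q2.support, z ∈ p.support) := by
  intro a b p
  induction p with
  | nil => intro _ ha hb; exact absurd ha hb
  | @cons a a' b h q ih =>
    intro hmono ha hb
    by_cases ha' : P a'
    · obtain ⟨u, v, q1, q2, hadj, h1, h2, hs1, hs2⟩ :=
        ih (fun d hd => hmono d (by simp [SimpleGraph.Walk.darts_cons, hd])) ha' hb
      refine ⟨u, v, SimpleGraph.Walk.cons h q1, q2, hadj, ?_, h2, ?_, ?_⟩
      · intro z hz
        rw [SimpleGraph.Walk.support_cons, List.mem_cons] at hz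
        rcases hz with rfl | hz
        · exact ha
        · exact h1 z hz
      · intro z hz
        rw [SimpleGraph.Walk.support_cons, List.mem_cons] at hz
        rcases hz with rfl | hz
        · simp [SimpleGraph.Walk.support_cons]
        · simp [SimpleGraph.Walk.support_cons, hs1 z hz]
      · intro z hz
        simp [SimpleGraph.Walk.support_cons, hs2 z hz]
    · refine ⟨a, a', SimpleGraph.Walk.nil, q, h, ?_, ?_, ?_, ?_⟩
      · intro z hz
        simp only [SimpleGraph.Walk.support_nil, List.mem_singleton] at hz
        subst hz; exact ha
      · exact walk_all_not q (fun d hd => hmono d (by simp [SimpleGraph.Walk.darts_cons, hd])) ha'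
      · intro z hz
        simp only [SimpleGraph.Walk.support_nil, List.mem_singleton] at hz
        subst hz; simp [SimpleGraph.Walk.support_cons]
      · intro z hz
        simp [SimpleGraph.Walk.support_cons, hz]

lemma induce_singleton_connected (G : SimpleGraph V) (v : V) :
    (G.induce {v}).Connected := by
  rw [SimpleGraph.connected_iff_exists_forall_reachable]
  refine ⟨⟨v, rfl⟩, ?_⟩
  rintro ⟨w, hw⟩
  simp only [Set.mem_singleton_iff] at hw
  subst hw
  exact SimpleGraph.Reachable.refl _

variable {W : Type*}

/-- `z` is assigned to `w` rather than `a`. -/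
def BPred (G : SimpleGraph V) (r : W → ℕ) (x : W → V) (w a : W) (z : V) : Prop :=
  G.dist z (x w) < G.dist z (x a) ∨ (G.dist z (x w) = G.dist z (x a) ∧ r w < r a)

/-- `z` is closer to one of `x w`, `x a` than to every other `x u`. -/
def BSide (G : SimpleGraph V) (x : W → V) (w a : W) (z : V) : Prop :=
  (∀ u, u ≠ w → u ≠ a → G.dist z (x w) < G.dist z (x u)) ∨
  (∀ u, u ≠ w → u ≠ a → G.dist z (x a) < G.dist z (x u))

lemma bpred_not {r : W → ℕ} {x : W → V} {w a : W} (hr : r w ≠ r a) (z : V) :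
    ¬ BPred G r x a w z → BPred G r x w a z := by
  unfold BPred
  intro h
  push_neg at h
  omega

lemma bpred_asymm {r : W → ℕ} {x : W → V} {w a : W} {z : V}
    (h1 : BPred G r x w a z) (h2 : BPred G r x a w z) : False := by
  unfold BPred at h1 h2; omega

lemma bside_symm {x : W → V} {w a : W} {z : V} (h : BSide G x a w z) : BSide G x w a z := by
  unfold BSide at h ⊢
  rcases h with h | h
  · exact Or.inr (fun u h1 h2 => h u h2 h1)
  · exact Or.inl (fun u h1 h2 => h u h2 h1)

lemma bside_combine {r : W → ℕ} {x : W → V} {w a : W} {z : V}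
    (hp : BPred G r x w a z) (hs : BSide G x w a z) :
    ∀ u, u ≠ w → u ≠ a → G.dist z (x w) < G.dist z (x u) := by
  intro u h1 h2
  rcases hs with hs | hs
  · exact hs u h1 h2
  · have := hs u h1 h2
    unfold BPred at hp
    omega

lemma key_pair (G : SimpleGraph V) (R : ℕ) (r : W → ℕ) (x : W → V)
    (hreach : ∀ w w', G.Reachable (x w) (x w'))
    (w a : W) (hne : w ≠ a) (hxne : x w ≠ x a)
    (c : V) (hcr : G.Reachable c (x w))
    (hcw : G.dist c (x w) ≤ R) (hca : G.dist c (x a) ≤ R)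
    (hother : ∀ u, u ≠ w → u ≠ a → R < G.dist c (x u)) :
    ∃ (u v : V) (q1 : G.Walk (x w) u) (q2 : G.Walk v (x a)), G.Adj u v ∧
      (∀ z ∈ q1.support, BPred G r x w a z ∧ BSide G x w a z) ∧
      (∀ z ∈ q2.support, ¬ BPred G r x w a z ∧ BSide G x w a z) := by
  have hcra : G.Reachable c (x a) := hcr.trans (hreach w a)
  obtain ⟨p1, hp1⟩ := hcr.exists_walk_length_eq_dist
  obtain ⟨p2, hp2⟩ := hcra.exists_walk_length_eq_dist
  obtain ⟨hsum1, hdart1⟩ := shortest_facts p1 hp1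
  obtain ⟨hsum2, hdart2⟩ := shortest_facts p2 hp2
  set π : G.Walk (x w) (x a) := p1.reverse.append p2 with hπ
  -- reachability of support points
  have hres1 : ∀ z ∈ p1.support, G.Reachable c z ∧ (∀ u' : W, G.Reachable z (x u')) := by
    intro z hz
    obtain ⟨h1, h2⟩ := reachable_of_mem_support p1 hz
    exact ⟨h1, fun u' => h2.trans (hreach w u')⟩
  have hres2 : ∀ z ∈ p2.support, G.Reachable c z ∧ (∀ u' : W, G.Reachable z (x u')) := by
    intro z hz
    obtain ⟨h1, h2⟩ := reachable_of_mem_support p2 hz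
    exact ⟨h1, fun u' => h2.trans (hreach a u')⟩
  have hmemπ : ∀ z ∈ π.support, z ∈ p1.support ∨ z ∈ p2.support := by
    intro z hz
    rw [hπ, SimpleGraph.Walk.mem_support_append_iff, SimpleGraph.Walk.support_reverse,
      List.mem_reverse] at hz
    exact hz
  -- start and end of π
  have hstart : BPred G r x w a (x w) := by
    left
    have h0 : G.dist (x w) (x w) = 0 := SimpleGraph.dist_self
    have hpos : 0 < G.dist (x w) (x a) := (hreach w a).pos_dist_of_ne hxne
    omega
  have hend : ¬ BPred G r x w a (x a) := by
    have h0 : G.dist (x a) (x a) = 0 := SimpleGraph.dist_self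
    have hpos : 0 < G.dist (x a) (x w) := ((hreach w a).symm).pos_dist_of_ne (Ne.symm hxne)
    unfold BPred
    omega
  -- monotonicity
  have hmono : ∀ d ∈ π.darts, BPred G r x w a d.snd → BPred G r x w a d.fst := by
    intro d hd
    rw [hπ, SimpleGraph.Walk.darts_append, List.mem_append] at hd
    rcases hd with hd | hd
    · rw [SimpleGraph.Walk.mem_darts_reverse] at hd
      have e1 := hdart1 d.symm hd
      have hfs : d.symm.fst = d.snd := rfl
      have hss : d.symm.snd = d.fst := rfl
      rw [hfs, hss] at e1
      -- e1 : G.dist d.snd (x w) = G.dist d.fst (x w) + 1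
      have hfmem : d.fst ∈ p1.support := by
        have := SimpleGraph.Walk.dart_snd_mem_support_of_mem_darts p1 hd
        exact this
      have hsmem : d.snd ∈ p1.support := by
        have := SimpleGraph.Walk.dart_fst_mem_support_of_mem_darts p1 hd
        exact this
      have e2 : G.dist d.fst (x a) ≤ 1 + G.dist d.snd (x a) := by
        have h := dist_tri (G := G) d.adj.reachable ((hres1 d.snd hsmem).2 a)
        simpa [SimpleGraph.dist_eq_one_iff_adj.mpr d.adj] using h
      have e3 : G.dist d.snd (x a) ≤ 1 + G.dist d.fst (x a) := by
        have h := dist_tri (G := G) d.adj.symm.reachable ((hres1 d.fst hfmem).2 a)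
        simpa [SimpleGraph.dist_eq_one_iff_adj.mpr d.adj.symm] using h
      unfold BPred
      omega
    · have e1 := hdart2 d hd
      -- e1 : G.dist d.fst (x a) = G.dist d.snd (x a) + 1
      have hfmem : d.fst ∈ p2.support := SimpleGraph.Walk.dart_fst_mem_support_of_mem_darts p2 hd
      have hsmem : d.snd ∈ p2.support := SimpleGraph.Walk.dart_snd_mem_support_of_mem_darts p2 hd
      have e2 : G.dist d.fst (x w) ≤ 1 + G.dist d.snd (x w) := by
        have h := dist_tri (G := G) d.adj.reachable ((hres2 d.snd hsmem).2 w)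
        simpa [SimpleGraph.dist_eq_one_iff_adj.mpr d.adj] using h
      have e3 : G.dist d.snd (x w) ≤ 1 + G.dist d.fst (x w) := by
        have h := dist_tri (G := G) d.adj.symm.reachable ((hres2 d.fst hfmem).2 w)
        simpa [SimpleGraph.dist_eq_one_iff_adj.mpr d.adj.symm] using h
      unfold BPred
      omega
  -- side property
  have hside : ∀ z ∈ π.support, BSide G x w a z := by
    intro z hz
    rcases hmemπ z hz with hz1 | hz2
    · left
      intro u' hu1 hu2
      have hsum := hsum1 z hz1
      have hfar := hother u' hu1 hu2
      have htri : G.dist c (x u') ≤ G.dist c z + G.dist z (x u') :=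
        dist_tri (hres1 z hz1).1 ((hres1 z hz1).2 u')
      omega
    · right
      intro u' hu1 hu2
      have hsum := hsum2 z hz2
      have hfar := hother u' hu1 hu2
      have htri : G.dist c (x u') ≤ G.dist c z + G.dist z (x u') :=
        dist_tri (hres2 z hz2).1 ((hres2 z hz2).2 u')
      omega
  obtain ⟨u, v, q1, q2, hadj, hP, hnP, hs1, hs2⟩ := walk_split π hmono hstart hend
  exact ⟨u, v, q1, q2, hadj,
    fun z hz => ⟨hP z hz, hside z (hs1 z hz)⟩,
    fun z hz => ⟨hnP z hz, hside z (hs2 z hz)⟩⟩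

end Helpers

/-- `G` contains `H` as a minor: there is a family of nonempty, pairwise disjoint
branch sets in `G`, each inducing a connected subgraph, such that every edge of `H`
is realized by an edge of `G` between the corresponding branch sets. -/
def HasMinor {V W : Type*} (G : SimpleGraph V) (H : SimpleGraph W) : Prop :=
  ∃ f : W → Set V,
    (∀ w, (f w).Nonempty) ∧
    (Pairwise fun w w' => Disjoint (f w) (f w')) ∧
    (∀ w, ((G.induce (f w)).Connected)) ∧
    (∀ w w', H.Adj w w' → ∃ u ∈ f w, ∃ v ∈ f w', G.Adj u v)

/-- If a simple graph `G` does not contain the `h`-vertex graph `H` as a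
minor, then the ball system of radius `R` of `G` has VC-dimension at most `h - 1`:
every finite set of vertices shattered by the ball system has at most `h - 1` elements. -/
theorem vc_dim_ball_system_of_minor_free {V W : Type*} [Fintype W]
    (G : SimpleGraph V) (H : SimpleGraph W) (hfree : ¬ HasMinor G H) (R : ℕ)
    (X : Finset V)
    (hshatter : ∀ Y ⊆ (X : Set V), ∃ c : V,
      {y : V | G.dist c y ≤ R} ∩ (X : Set V) = Y) :
    X.card ≤ Fintype.card W - 1 := by
  classical
  by_contra hcard
  push_neg at hcard
  apply hfree
  -- Case: W is empty
  rcases Nat.eq_zero_or_pos (Fintype.card W) with h0 | hposW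
  · haveI : IsEmpty W := Fintype.card_eq_zero_iff.mp h0
    exact ⟨fun _ => ∅, fun w => isEmptyElim w, fun w => isEmptyElim w,
      fun w => isEmptyElim w, fun w => isEmptyElim w⟩
  haveI : Nonempty W := Fintype.card_pos_iff.mp hposW
  have hXcard : Fintype.card W ≤ X.card := by omega
  -- an injection from W into X
  obtain ⟨e⟩ : Nonempty (W ↪ ↥X) :=
    Function.Embedding.nonempty_of_card_le (by simpa [Fintype.card_coe] using hXcard)
  set x : W → V := fun w => ↑(e w) with hxdef
  have hxmem : ∀ w, x w ∈ X := fun w => (e w).2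
  have hxinj : Function.Injective x := fun a b hab => e.injective (Subtype.ext hab)
  -- the center for the empty set
  obtain ⟨c0, hc0⟩ := hshatter ∅ (Set.empty_subset _)
  have hc0far : ∀ w : W, R < G.dist c0 (x w) := by
    intro w
    by_contra hle
    push_neg at hle
    have hmem : x w ∈ ({y : V | G.dist c0 y ≤ R} ∩ (X : Set V)) := ⟨hle, hxmem w⟩
    rw [hc0] at hmem
    exact hmem
  have hreach0 : ∀ w : W, G.Reachable c0 (x w) := by
    intro w
    apply SimpleGraph.Reachable.of_dist_ne_zero
    have := hc0far w
    omega
  have hreach : ∀ w w', G.Reachable (x w) (x w') :=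
    fun w w' => (hreach0 w).symm.trans (hreach0 w')
  rcases Nat.lt_or_ge (Fintype.card W) 3 with hlt3 | hge3
  -- Cases card W = 1 or 2
  · rcases Nat.lt_or_ge (Fintype.card W) 2 with hlt2 | hge2
    · -- card W = 1
      haveI : Subsingleton W := Fintype.card_le_one_iff_subsingleton.mp (by omega)
      refine ⟨fun w => {x w}, fun w => ⟨x w, rfl⟩, ?_, fun w => induce_singleton_connected G _,
        fun w w' hww' => absurd (Subsingleton.elim w w') hww'.ne⟩
      intro w w' hww'
      exact absurd (Subsingleton.elim w w') hww'
    · -- card W = 2 : we only need one edge of G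
      obtain ⟨w0⟩ : Nonempty W := inferInstance
      obtain ⟨p, hp⟩ := (hreach0 w0).exists_walk_length_eq_dist
      have hplen : 0 < p.length := by
        rw [hp]; have := hc0far w0; omega
      cases p with
      | nil => simp at hplen
      | @cons _ v2 _ hadj q =>
        have hone : ∀ w w' : W, w ≠ w' → w = w0 ∨ w' = w0 := by
          intro w w' hne
          by_contra hcon
          push_neg at hcon
          have h3 : ({w, w', w0} : Finset W).card = 3 := by
            rw [Finset.card_insert_of_notMem (by simp [hne, hcon.1]),
              Finset.card_insert_of_notMem (by simp [hcon.2])]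
            simp
          have := Finset.card_le_univ ({w, w', w0} : Finset W)
          rw [h3] at this
          have hcu : (Finset.univ : Finset W).card = Fintype.card W := rfl
          omega
        refine ⟨fun w => if w = w0 then {c0} else {v2}, ?_, ?_, ?_, ?_⟩
        · intro w; by_cases h : w = w0 <;> simp [h]
        · intro w w' hne
          have hc0v2 : c0 ≠ v2 := hadj.ne
          rcases hone w w' hne with h1 | h1
          · subst h1
            have h2 : ¬ w' = w := fun hh => hne hh.symm
            simp only [if_pos rfl, if_neg h2]
            exact Set.disjoint_singleton.mpr hc0v2
          · subst h1
            simp only [if_neg hne, if_pos rfl]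
            exact Set.disjoint_singleton.mpr hc0v2.symm
        · intro w
          by_cases h : w = w0
          · show (SimpleGraph.induce (if w = w0 then {c0} else {v2}) G).Connected
            rw [if_pos h]; exact induce_singleton_connected G _
          · show (SimpleGraph.induce (if w = w0 then {c0} else {v2}) G).Connected
            rw [if_neg h]; exact induce_singleton_connected G _
        · intro w w' hww'
          have hne := hww'.ne
          rcases hone w w' hne with h1 | h1
          · subst h1
            refine ⟨c0, by simp, v2, ?_, hadj⟩
            have h2 : ¬ w' = w := fun hh => hne hh.symm
            simp [h2]
          · subst h1
            refine ⟨v2, ?_, c0, by simp, hadj.symm⟩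
            simp [hne]
  -- Main case : card W ≥ 3
  · set r : W → ℕ := fun w => ((Fintype.equivFin W) w : ℕ) with hrdef
    have hrinj : Function.Injective r := by
      intro a b hab
      exact (Fintype.equivFin W).injective (Fin.val_injective hab)
    have third : ∀ w a : W, ∃ u, u ≠ w ∧ u ≠ a := by
      intro w a
      by_contra hcon
      push_neg at hcon
      have hsub : (Finset.univ : Finset W) ⊆ {w, a} := by
        intro u _
        rcases eq_or_ne u w with h | h
        · simp [h]
        · simp [hcon u h]
      have := Finset.card_le_card hsub
      have h2 : ({w, a} : Finset W).card ≤ 2 := Finset.card_insert_le _ _ |>.trans (by simp)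
      have hcu : (Finset.univ : Finset W).card = Fintype.card W := rfl
      omega
    have key : ∀ w a : W, w ≠ a →
        ∃ (u v : V) (q1 : G.Walk (x w) u) (q2 : G.Walk v (x a)), G.Adj u v ∧
          (∀ z ∈ q1.support, BPred G r x w a z ∧ BSide G x w a z) ∧
          (∀ z ∈ q2.support, ¬ BPred G r x w a z ∧ BSide G x w a z) := by
      intro w a hne
      obtain ⟨c, hc⟩ := hshatter {x w, x a}
        (by
          intro y hy
          rcases hy with h | h
          · exact h ▸ hxmem w
          · exact h ▸ hxmem a)
      have hcw : G.dist c (x w) ≤ R := by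
        have hm : x w ∈ ({x w, x a} : Set V) := by simp
        rw [← hc] at hm
        exact hm.1
      have hca : G.dist c (x a) ≤ R := by
        have hm : x a ∈ ({x w, x a} : Set V) := by simp
        rw [← hc] at hm
        exact hm.1
      have hother : ∀ u, u ≠ w → u ≠ a → R < G.dist c (x u) := by
        intro u hu1 hu2
        by_contra hle
        push_neg at hle
        have hm : x u ∈ ({y : V | G.dist c y ≤ R} ∩ (X : Set V)) := ⟨hle, hxmem u⟩
        rw [hc] at hm
        rcases hm with h | h
        · exact hu1 (hxinj h)
        · exact hu2 (hxinj h)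
      obtain ⟨u0, hu01, hu02⟩ := third w a
      have hcr : G.Reachable c (x w) := by
        have h1 : G.Reachable c (x u0) := by
          apply SimpleGraph.Reachable.of_dist_ne_zero
          have := hother u0 hu01 hu02
          omega
        exact h1.trans (hreach u0 w)
      exact key_pair G R r x hreach w a hne (fun h => hne (hxinj h)) c hcr hcw hca hother
    choose bu bv q1 q2 hadj hq1 hq2 using key
    set f : W → Set V := fun w =>
      ⋃ (a : W) (h : a ≠ w),
        ({z | z ∈ (q1 w a (Ne.symm h)).support} ∪ {z | z ∈ (q2 a w h).support}) with hfdef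
    have hmemf : ∀ w z, z ∈ f w ↔ ∃ (a : W) (h : a ≠ w),
        z ∈ (q1 w a (Ne.symm h)).support ∨ z ∈ (q2 a w h).support := by
      intro w z
      simp [hfdef, Set.mem_iUnion]
    -- membership yields the assignment property
    have hassign : ∀ w z, z ∈ f w → ∃ a : W, a ≠ w ∧ BPred G r x w a z ∧ BSide G x w a z := by
      intro w z hz
      rw [hmemf] at hz
      obtain ⟨a, h, hz⟩ := hz
      rcases hz with hz | hz
      · exact ⟨a, h, hq1 w a (Ne.symm h) z hz⟩
      · obtain ⟨hnp, hs⟩ := hq2 a w h z hz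
        refine ⟨a, h, bpred_not (w := w) (a := a) (fun hh => h ((hrinj hh).symm)) z hnp, bside_symm hs⟩
    refine ⟨f, ?_, ?_, ?_, ?_⟩
    · -- nonempty
      intro w
      obtain ⟨a, ha1, _⟩ := third w w
      refine ⟨x w, (hmemf w (x w)).mpr ⟨a, ha1, Or.inl ?_⟩⟩
      exact SimpleGraph.Walk.start_mem_support _
    · -- pairwise disjoint
      intro w w2 hne
      rw [Set.disjoint_left]
      intro z hzw hzw2
      obtain ⟨a, ha, hpa, hsa⟩ := hassign w z hzw
      obtain ⟨b, hb, hpb, hsb⟩ := hassign w2 z hzw2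
      have mf1 := bside_combine hpa hsa
      have mf2 := bside_combine hpb hsb
      by_cases hwa : w2 = a
      · subst hwa
        by_cases hwb : w = b
        · subst hwb
          exact bpred_asymm hpa hpb
        · have h1 := mf2 w hne hwb
          unfold BPred at hpa
          omega
      · have h1 := mf1 w2 hne.symm hwa
        by_cases hwb : w = b
        · subst hwb
          unfold BPred at hpb
          omega
        · have h2 := mf2 w hne hwb
          omega
    · -- connected
      intro w
      apply G.induce_connected_of_patches (x w)
      · obtain ⟨a, ha1, _⟩ := third w w
        exact (hmemf w (x w)).mpr ⟨a, ha1, Or.inl (SimpleGraph.Walk.start_mem_support _)⟩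
      · intro z hz
        rw [hmemf] at hz
        obtain ⟨a, h, hz'⟩ := hz
        rcases hz' with hz' | hz'
        · refine ⟨{y | y ∈ (q1 w a (Ne.symm h)).support}, ?_, ?_, hz', ?_⟩
          · intro y hy
            exact (hmemf w y).mpr ⟨a, h, Or.inl hy⟩
          · exact SimpleGraph.Walk.start_mem_support _
          · exact ((q1 w a (Ne.symm h)).connected_induce_support).preconnected _ _
        · refine ⟨{y | y ∈ (q2 a w h).support}, ?_, ?_, hz', ?_⟩
          · intro y hy
            exact (hmemf w y).mpr ⟨a, h, Or.inr hy⟩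
          · exact SimpleGraph.Walk.end_mem_support _
          · exact ((q2 a w h).connected_induce_support).preconnected _ _
    · -- adjacency
      intro w w' hww'
      have hne : w ≠ w' := hww'.ne
      refine ⟨bu w w' hne, ?_, bv w w' hne, ?_, hadj w w' hne⟩
      · exact (hmemf w _).mpr ⟨w', Ne.symm hne, Or.inl (SimpleGraph.Walk.end_mem_support _)⟩
      · exact (hmemf w' _).mpr ⟨w, hne, Or.inr (SimpleGraph.Walk.start_mem_support _)⟩
end

section
/- Let G be a connected simple graph and R ∈ ℕ. Let P be a shortest path from a to b (a path of length d(a,b)) and Q be a shortest path from c to d (a path of length d(c,d)). Suppose m₁ is a vertex of P with d(a,m₁) ≤ R and d(b,m₁) ≤ R, m₂ is a vertex of Q with d(c,m₂) ≤ R and d(d,m₂) ≤ R, and P and Q share a common vertex x. Then m₁ ∈ B(c) ∪ B(d) or m₂ ∈ B(a) ∪ B(b); that is, d(m₁,c) ≤ R or d(m₁,d) ≤ R or d(m₂,a) ≤ R or d(m₂,b) ≤ R. -/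
open SimpleGraph

private lemma split_shortest {V : Type*} [DecidableEq V] {G : SimpleGraph V} (hG : G.Connected)
    {a b : V} (P : G.Walk a b) (hPlen : P.length = G.dist a b) {w : V}
    (hw : w ∈ P.support) :
    (P.takeUntil w hw).length = G.dist a w ∧
    (P.dropUntil w hw).length = G.dist w b := by
  have hsum : (P.takeUntil w hw).length + (P.dropUntil w hw).length = P.length := by
    rw [← SimpleGraph.Walk.length_append, P.take_spec hw]
  have h1 := SimpleGraph.dist_le (P.takeUntil w hw)
  have h2 := SimpleGraph.dist_le (P.dropUntil w hw)
  have h3 := hG.dist_triangle (u := a) (v := w) (w := b)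
  omega

/-- one of m, x is between a and the other on a shortest path -/
private lemma between_of_shortest {V : Type*} [DecidableEq V] {G : SimpleGraph V} (hG : G.Connected)
    {a b : V} (P : G.Walk a b) (hPlen : P.length = G.dist a b) {m x : V}
    (hm : m ∈ P.support) (hx : x ∈ P.support) :
    G.dist a m + G.dist m x = G.dist a x ∨
    G.dist a x + G.dist x m = G.dist a m := by
  haveI := Classical.decEq V
  obtain ⟨h1, h2⟩ := split_shortest hG P hPlen hx
  rcases (SimpleGraph.Walk.mem_support_append_iff _ _).mp
      ((P.take_spec hx) ▸ hm) with h | h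
  · left
    obtain ⟨h3, h4⟩ := split_shortest hG (P.takeUntil x hx) h1 h
    have hs := congrArg SimpleGraph.Walk.length ((P.takeUntil x hx).take_spec h)
    rw [SimpleGraph.Walk.length_append] at hs
    omega
  · right
    obtain ⟨h3, h4⟩ := split_shortest hG (P.dropUntil x hx) h2 h
    have hs := congrArg SimpleGraph.Walk.length ((P.dropUntil x hx).take_spec h)
    rw [SimpleGraph.Walk.length_append] at hs
    have hsP := congrArg SimpleGraph.Walk.length (P.take_spec hx)
    rw [SimpleGraph.Walk.length_append] at hsP
    have t1 := hG.dist_triangle (u := a) (v := x) (w := m)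
    have t2 := hG.dist_triangle (u := a) (v := m) (w := b)
    omega

/-- Let `P` be a shortest `a`-to-`b` path and `Q` a shortest `c`-to-`d`
path in a connected simple graph, with midpoints `m₁` on `P` (within distance `R` of
both `a` and `b`) and `m₂` on `Q` (within distance `R` of both `c` and `d`).  If `P`
and `Q` share a vertex `x`, then `m₁ ∈ B(c) ∪ B(d)` or `m₂ ∈ B(a) ∪ B(b)`. -/
theorem midpoint_in_ball_of_crossing_shortest_paths {V : Type*} (G : SimpleGraph V)
    (hG : G.Connected) (R : ℕ) (a b c d : V)
    (P : G.Walk a b) (hP : P.IsPath) (hPlen : P.length = G.dist a b)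
    (Q : G.Walk c d) (hQ : Q.IsPath) (hQlen : Q.length = G.dist c d)
    (m₁ : V) (hm₁P : m₁ ∈ P.support) (hm₁a : G.dist a m₁ ≤ R) (hm₁b : G.dist b m₁ ≤ R)
    (m₂ : V) (hm₂Q : m₂ ∈ Q.support) (hm₂c : G.dist c m₂ ≤ R) (hm₂d : G.dist d m₂ ≤ R)
    (x : V) (hxP : x ∈ P.support) (hxQ : x ∈ Q.support) :
    G.dist m₁ c ≤ R ∨ G.dist m₁ d ≤ R ∨ G.dist m₂ a ≤ R ∨ G.dist m₂ b ≤ R := by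
  haveI := Classical.decEq V
  obtain ⟨hm1a, hm1b⟩ := split_shortest hG P hPlen hm₁P
  obtain ⟨hxa, hxb⟩ := split_shortest hG P hPlen hxP
  obtain ⟨hm2c, hm2d⟩ := split_shortest hG Q hQlen hm₂Q
  obtain ⟨hxc, hxd⟩ := split_shortest hG Q hQlen hxQ
  have hsP : G.dist a m₁ + G.dist m₁ b = P.length := by
    have := congrArg SimpleGraph.Walk.length (P.take_spec hm₁P)
    rw [SimpleGraph.Walk.length_append] at this; omega
  have hsPx : G.dist a x + G.dist x b = P.length := by
    have := congrArg SimpleGraph.Walk.length (P.take_spec hxP)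
    rw [SimpleGraph.Walk.length_append] at this; omega
  have hsQ : G.dist c m₂ + G.dist m₂ d = Q.length := by
    have := congrArg SimpleGraph.Walk.length (Q.take_spec hm₂Q)
    rw [SimpleGraph.Walk.length_append] at this; omega
  have hsQx : G.dist c x + G.dist x d = Q.length := by
    have := congrArg SimpleGraph.Walk.length (Q.take_spec hxQ)
    rw [SimpleGraph.Walk.length_append] at this; omega
  have D1 := between_of_shortest hG P hPlen hm₁P hxP
  have D2 := between_of_shortest hG Q hQlen hm₂Q hxQ
  have t1 := hG.dist_triangle (u := m₁) (v := x) (w := c)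
  have t2 := hG.dist_triangle (u := m₁) (v := x) (w := d)
  have t3 := hG.dist_triangle (u := m₂) (v := x) (w := a)
  have t4 := hG.dist_triangle (u := m₂) (v := x) (w := b)
  have c1 : G.dist m₁ x = G.dist x m₁ := SimpleGraph.dist_comm ..
  have c2 : G.dist m₂ x = G.dist x m₂ := SimpleGraph.dist_comm ..
  have c3 : G.dist x c = G.dist c x := SimpleGraph.dist_comm ..
  have c4 : G.dist x d = G.dist d x := SimpleGraph.dist_comm ..
  have c5 : G.dist x a = G.dist a x := SimpleGraph.dist_comm ..
  have c6 : G.dist x b = G.dist b x := SimpleGraph.dist_comm ..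
  have c7 : G.dist x b + G.dist a x = P.length := by omega
  have c8 : G.dist b m₁ = G.dist m₁ b := SimpleGraph.dist_comm ..
  have c9 : G.dist d m₂ = G.dist m₂ d := SimpleGraph.dist_comm ..
  have hxd' : G.dist c x + G.dist x d = Q.length := hsQx
  omega
end

section
/- Let G be a connected simple graph, R ∈ ℕ, and q ≥ 2. Suppose there are N ≥ 2q − 3 triples (a_i, b_i, m_i) of vertices, i = 1,…,N, such that the 2N endpoints a_1, b_1, …, a_N, b_N are pairwise distinct, d(a_i, m_i) ≤ R and d(b_i, m_i) ≤ R for every i, and for every pair of indices i ≠ j at least one of the following holds: d(m_i, a_j) ≤ R, or d(m_i, b_j) ≤ R, or d(m_j, a_i) ≤ R, or d(m_j, b_i) ≤ R. Then there exist an index i and a set S of at least q vertices, each of which is an endpoint a_j or b_j of one of the triples, such that d(c, m_i) ≤ R for every c ∈ S; in particular m_i lies in at least q balls of radius R centered at distinct endpoints. -/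
/-- Given `N ≥ 2q - 3` triples `(aᵢ, bᵢ, mᵢ)` with pairwise distinct
endpoints, each midpoint `mᵢ` within distance `R` of its endpoints, and such that for
every pair `i ≠ j` some midpoint is within distance `R` of an endpoint of the other
triple, there is an index `i` and a set of at least `q` endpoints all within distance
`R` of `mᵢ`; in particular `mᵢ` lies in at least `q` balls centered at distinct
endpoints. -/
theorem midpoint_in_many_balls {V : Type*} (G : SimpleGraph V) (hG : G.Connected)
    (R q N : ℕ) (hq : 2 ≤ q) (hN : 2 * q - 3 ≤ N)
    (a b m : Fin N → V)
    (hdistinct : Function.Injective (Sum.elim a b : Fin N ⊕ Fin N → V))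
    (hmid : ∀ i, G.dist (a i) (m i) ≤ R ∧ G.dist (b i) (m i) ≤ R)
    (hpair : ∀ i j, i ≠ j →
      G.dist (m i) (a j) ≤ R ∨ G.dist (m i) (b j) ≤ R ∨
      G.dist (m j) (a i) ≤ R ∨ G.dist (m j) (b i) ≤ R) :
    ∃ i : Fin N, ∃ S : Finset V, q ≤ S.card ∧
      ∀ e ∈ S, (∃ j, e = a j ∨ e = b j) ∧ G.dist e (m i) ≤ R := by
  classical
  by_contra hcon
  push_neg at hcon
  set E : Fin N ⊕ Fin N → V := Sum.elim a b with hE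
  have hNpos : 0 < N := by omega
  set F : Fin N → Finset (Fin N ⊕ Fin N) :=
    fun i => Finset.univ.filter (fun k => G.dist (E k) (m i) ≤ R) with hF
  have hmemF : ∀ i k, k ∈ F i ↔ G.dist (E k) (m i) ≤ R := by
    intro i k; simp [hF]
  -- each F i is small
  have hFcard : ∀ i, (F i).card ≤ q - 1 := by
    intro i
    by_contra hc
    push_neg at hc
    have hcard : q ≤ ((F i).image E).card := by
      rw [Finset.card_image_of_injective _ hdistinct]
      omega
    obtain ⟨e, he, hbad⟩ := hcon i ((F i).image E) hcard
    obtain ⟨k, hk, rfl⟩ := Finset.mem_image.mp he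
    have hdist := (hmemF i k).mp hk
    have hex : ∃ j, E k = a j ∨ E k = b j := by
      cases k with
      | inl j => exact ⟨j, Or.inl rfl⟩
      | inr j => exact ⟨j, Or.inr rfl⟩
    exact absurd hdist (Nat.not_le.mpr (hbad hex))
  have hpairsubF : ∀ i, ({Sum.inl i, Sum.inr i} : Finset (Fin N ⊕ Fin N)) ⊆ F i := by
    intro i k hk
    rw [hmemF]
    rcases Finset.mem_insert.mp hk with rfl | hk
    · exact (hmid i).1
    · rw [Finset.mem_singleton.mp hk]; exact (hmid i).2
  have hpaircard : ∀ i : Fin N,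
      ({Sum.inl i, Sum.inr i} : Finset (Fin N ⊕ Fin N)).card = 2 := by
    intro i; simp
  have hq3 : 3 ≤ q := by
    have h1 := Finset.card_le_card (hpairsubF ⟨0, hNpos⟩)
    rw [hpaircard] at h1
    have h2 := hFcard ⟨0, hNpos⟩
    omega
  -- the cross sets
  set c : Fin N → Finset (Fin N) := fun i =>
    Finset.univ.filter (fun j => j ≠ i ∧
      (G.dist (m i) (a j) ≤ R ∨ G.dist (m i) (b j) ≤ R)) with hc
  have hmemc : ∀ i j, j ∈ c i ↔ j ≠ i ∧
      (G.dist (m i) (a j) ≤ R ∨ G.dist (m i) (b j) ≤ R) := by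
    intro i j; simp [hc]
  have hccard : ∀ i, (c i).card ≤ q - 3 := by
    intro i
    have hsub : ∀ j ∈ c i,
        (if G.dist (m i) (a j) ≤ R then Sum.inl j else Sum.inr j) ∈
          F i \ ({Sum.inl i, Sum.inr i} : Finset (Fin N ⊕ Fin N)) := by
      intro j hj
      obtain ⟨hji, hor⟩ := (hmemc i j).mp hj
      rw [Finset.mem_sdiff]
      constructor
      · rw [hmemF]
        by_cases hcase : G.dist (m i) (a j) ≤ R
        · simp only [if_pos hcase]
          simpa [hE, G.dist_comm] using hcase
        · simp only [if_neg hcase]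
          have hb : G.dist (m i) (b j) ≤ R := by tauto
          simpa [hE, G.dist_comm] using hb
      · by_cases hcase : G.dist (m i) (a j) ≤ R <;>
          simp [hcase, hji]
    have hinj : Set.InjOn
        (fun j => if G.dist (m i) (a j) ≤ R then Sum.inl j else Sum.inr j)
        (c i : Set (Fin N)) := by
      intro x hx y hy hxy
      by_cases h1 : G.dist (m i) (a x) ≤ R <;>
        by_cases h2 : G.dist (m i) (a y) ≤ R <;>
          simp [h1, h2] at hxy <;> exact hxy
    have h1 := Finset.card_le_card_of_injOn _ hsub hinj
    have h2 : (F i \ ({Sum.inl i, Sum.inr i} : Finset (Fin N ⊕ Fin N))).card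
        = (F i).card - 2 := by
      rw [Finset.card_sdiff_of_subset (hpairsubF i), hpaircard]
    have h3 := hFcard i
    omega
  -- counting ordered pairs
  set A : Finset (Fin N × Fin N) :=
    Finset.univ.biUnion (fun i => (c i).image (fun j => (i, j))) with hA
  set B : Finset (Fin N × Fin N) :=
    Finset.univ.biUnion (fun i => (c i).image (fun j => (j, i))) with hB
  have hsubAB : (Finset.univ : Finset (Fin N)).offDiag ⊆ A ∪ B := by
    intro p hp
    rw [Finset.mem_offDiag] at hp
    obtain ⟨-, -, hne⟩ := hp
    rcases hpair p.1 p.2 hne with h | h | h | h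
    · apply Finset.mem_union_left
      rw [hA, Finset.mem_biUnion]
      exact ⟨p.1, Finset.mem_univ _, Finset.mem_image.mpr
        ⟨p.2, (hmemc p.1 p.2).mpr ⟨Ne.symm hne, Or.inl h⟩, rfl⟩⟩
    · apply Finset.mem_union_left
      rw [hA, Finset.mem_biUnion]
      exact ⟨p.1, Finset.mem_univ _, Finset.mem_image.mpr
        ⟨p.2, (hmemc p.1 p.2).mpr ⟨Ne.symm hne, Or.inr h⟩, rfl⟩⟩
    · apply Finset.mem_union_right
      rw [hB, Finset.mem_biUnion]
      exact ⟨p.2, Finset.mem_univ _, Finset.mem_image.mpr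
        ⟨p.1, (hmemc p.2 p.1).mpr ⟨hne, Or.inl h⟩, rfl⟩⟩
    · apply Finset.mem_union_right
      rw [hB, Finset.mem_biUnion]
      exact ⟨p.2, Finset.mem_univ _, Finset.mem_image.mpr
        ⟨p.1, (hmemc p.2 p.1).mpr ⟨hne, Or.inr h⟩, rfl⟩⟩
  have hAcard : A.card ≤ N * (q - 3) := by
    calc A.card ≤ ∑ i : Fin N, ((c i).image (fun j => (i, j))).card :=
          Finset.card_biUnion_le
      _ ≤ ∑ i : Fin N, (q - 3) := by
          apply Finset.sum_le_sum
          intro i _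
          exact le_trans Finset.card_image_le (hccard i)
      _ = N * (q - 3) := by simp [Finset.sum_const, Finset.card_univ, mul_comm]
  have hBcard : B.card ≤ N * (q - 3) := by
    calc B.card ≤ ∑ i : Fin N, ((c i).image (fun j => (j, i))).card :=
          Finset.card_biUnion_le
      _ ≤ ∑ i : Fin N, (q - 3) := by
          apply Finset.sum_le_sum
          intro i _
          exact le_trans Finset.card_image_le (hccard i)
      _ = N * (q - 3) := by simp [Finset.sum_const, Finset.card_univ, mul_comm]
  have hoff : (Finset.univ : Finset (Fin N)).offDiag.card = N * N - N := by
    rw [Finset.offDiag_card]; simp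
  have hmain : N * N - N ≤ N * (q - 3) + N * (q - 3) := by
    rw [← hoff]
    calc (Finset.univ : Finset (Fin N)).offDiag.card ≤ (A ∪ B).card :=
          Finset.card_le_card hsubAB
      _ ≤ A.card + B.card := Finset.card_union_le _ _
      _ ≤ N * (q - 3) + N * (q - 3) := Nat.add_le_add hAcard hBcard
  have hmul : N * (N - 1) ≤ N * (2 * (q - 3)) := by
    have h1 : N * (N - 1) = N * N - N := by
      rw [Nat.mul_sub, Nat.mul_one]
    have h2 : N * (2 * (q - 3)) = N * (q - 3) + N * (q - 3) := by ring
    omega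
  have hfin : N - 1 ≤ 2 * (q - 3) := Nat.le_of_mul_le_mul_left hmul hNpos
  omega
end

section
/- Let G be a connected simple graph with vertex set V whose diameter is at most 2R, and suppose G has a tree decomposition (T, X) of width at most tw (every bag has at most tw + 1 vertices). Then there is a set S of at most tw + 1 vertices of G such that d(x, S) ≤ R for every vertex x of G. -/
namespace TWAux

open SimpleGraph

variable {ι : Type*} {T : SimpleGraph ι}

noncomputable def pth (hT : T.IsTree) (p q : ι) : T.Walk p q :=
  (hT.existsUnique_path p q).choose

lemma pth_isPath (hT : T.IsTree) (p q : ι) : (pth hT p q).IsPath :=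
  (hT.existsUnique_path p q).choose_spec.1

lemma pth_eq (hT : T.IsTree) {p q : ι} (w : T.Walk p q) (hw : w.IsPath) :
    w = pth hT p q :=
  (hT.existsUnique_path p q).choose_spec.2 w hw

lemma pth_rev (hT : T.IsTree) (p q : ι) : pth hT q p = (pth hT p q).reverse :=
  (pth_eq hT _ ((pth_isPath hT p q).reverse)).symm

lemma mem_pth_rev (hT : T.IsTree) {b p q : ι} (h : b ∈ (pth hT p q).support) :
    b ∈ (pth hT q p).support := by
  rw [pth_rev hT p q, SimpleGraph.Walk.support_reverse, List.mem_reverse]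
  exact h

lemma pth_decomp (hT : T.IsTree) {b p r : ι} (hb : b ∈ (pth hT p r).support) :
    pth hT p r = (pth hT p b).append (pth hT b r) := by
  classical
  have h1 : ((pth hT p r).takeUntil b hb) = pth hT p b :=
    pth_eq hT _ ((pth_isPath hT p r).takeUntil hb)
  have h2 : ((pth hT p r).dropUntil b hb) = pth hT b r :=
    pth_eq hT _ ((pth_isPath hT p r).dropUntil hb)
  rw [← h1, ← h2, SimpleGraph.Walk.take_spec]

lemma pth_tri (hT : T.IsTree) {b p r : ι} (hb : b ∈ (pth hT p r).support) (q : ι) :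
    b ∈ (pth hT p q).support ∨ b ∈ (pth hT q r).support := by
  classical
  have hbp : ((pth hT p q).append (pth hT q r)).bypass = pth hT p r :=
    pth_eq hT _ (SimpleGraph.Walk.bypass_isPath _)
  have : b ∈ ((pth hT p q).append (pth hT q r)).support := by
    apply SimpleGraph.Walk.support_bypass_subset
    rw [hbp]; exact hb
  rwa [SimpleGraph.Walk.mem_support_append_iff] at this

lemma pth_sv (hT : T.IsTree) {p q c : ι} (hab : T.Adj p q)
    (hq : q ∈ (pth hT p c).support) :
    pth hT p c = SimpleGraph.Walk.cons hab (pth hT q c) := by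
  classical
  have h1 : ((pth hT p c).takeUntil q hq) = pth hT p q :=
    pth_eq hT _ ((pth_isPath hT p c).takeUntil hq)
  have h2 : ((pth hT p c).dropUntil q hq) = pth hT q c :=
    pth_eq hT _ ((pth_isPath hT p c).dropUntil hq)
  have h3 : pth hT p q = SimpleGraph.Walk.cons hab SimpleGraph.Walk.nil := by
    refine (pth_eq hT _ ?_).symm
    rw [SimpleGraph.Walk.cons_isPath_iff]
    exact ⟨SimpleGraph.Walk.IsPath.nil, by simp [hab.ne]⟩
  have := (pth hT p c).take_spec hq
  rw [h1, h2, h3] at this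
  rw [← this]
  simp

lemma pth_sv_not (hT : T.IsTree) {p q c : ι} (hab : T.Adj p q)
    (hq : q ∈ (pth hT p c).support) :
    p ∉ (pth hT q c).support := by
  have := pth_isPath hT p c
  rw [pth_sv hT hab hq, SimpleGraph.Walk.cons_isPath_iff] at this
  exact this.2

lemma pth_tot (hT : T.IsTree) {p q : ι} (hab : T.Adj p q) (c : ι) :
    q ∈ (pth hT p c).support ∨ p ∈ (pth hT q c).support := by
  by_contra h
  push_neg at h
  obtain ⟨h1, h2⟩ := h
  have hpath : (SimpleGraph.Walk.cons hab (pth hT q c)).IsPath := by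
    rw [SimpleGraph.Walk.cons_isPath_iff]
    exact ⟨pth_isPath hT q c, h2⟩
  have := pth_eq hT _ hpath
  apply h1
  rw [← this]
  simp

lemma pth_nil (hT : T.IsTree) (p : ι) : pth hT p p = SimpleGraph.Walk.nil :=
  (pth_eq hT _ SimpleGraph.Walk.IsPath.nil).symm

end TWAux
namespace TWAux

open SimpleGraph

variable {ι V : Type*} {T : SimpleGraph ι} {G : SimpleGraph V} {X : ι → Finset V}

lemma sep1 (hT : T.IsTree)
    (hpaths : ∀ (a c : ι) (p : T.Walk a c), p.IsPath →
      ∀ b ∈ p.support, (X a : Set V) ∩ (X c : Set V) ⊆ (X b : Set V))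
    (hedges : ∀ u v : V, G.Adj u v → ∃ a : ι, u ∈ X a ∧ v ∈ X a)
    {x y : V} (w : G.Walk x y) :
    ∀ (cx cy : ι), x ∈ X cx → y ∈ X cy → ∀ b, b ∈ (pth hT cx cy).support →
      ∃ z ∈ w.support, z ∈ X b := by
  induction w with
  | nil =>
    intro cx cy hx hy b hb
    refine ⟨_, SimpleGraph.Walk.start_mem_support _, ?_⟩
    have := hpaths cx cy (pth hT cx cy) (pth_isPath hT cx cy) b hb
      ⟨by simpa using hx, by simpa using hy⟩
    simpa using this
  | @cons x u' y h q ih =>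
    intro cx cy hx hy b hb
    obtain ⟨e, he1, he2⟩ := hedges _ _ h
    rcases pth_tri hT hb e with hbe | hbe
    · refine ⟨x, by simp, ?_⟩
      have := hpaths cx e (pth hT cx e) (pth_isPath hT cx e) b hbe
        ⟨by simpa using hx, by simpa using he1⟩
      simpa using this
    · obtain ⟨z, hz1, hz2⟩ := ih e cy he2 hy b hbe
      exact ⟨z, by simp [hz1], hz2⟩

lemma cross (hT : T.IsTree) {A B cx cy : ι} (hab : T.Adj A B)
    (hA : A ∈ (pth hT B cx).support) (hB : B ∈ (pth hT A cy).support) :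
    A ∈ (pth hT cx cy).support ∧ B ∈ (pth hT cx cy).support := by
  constructor
  · by_contra hA'
    have h1 : A ∈ (pth hT cx B).support := mem_pth_rev hT hA
    rcases pth_tri hT h1 cy with h | h
    · exact hA' h
    · exact (pth_sv_not hT hab hB) (mem_pth_rev hT h)
  · by_contra hB'
    have h1 : B ∈ (pth hT cy A).support := mem_pth_rev hT hB
    rcases pth_tri hT h1 cx with h | h
    · exact hB' (mem_pth_rev hT h)
    · exact (pth_sv_not hT hab.symm hA) (mem_pth_rev hT h)

lemma sep2 (hT : T.IsTree)
    (hpaths : ∀ (a c : ι) (p : T.Walk a c), p.IsPath →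
      ∀ b ∈ p.support, (X a : Set V) ∩ (X c : Set V) ⊆ (X b : Set V))
    (hedges : ∀ u v : V, G.Adj u v → ∃ a : ι, u ∈ X a ∧ v ∈ X a)
    {A B : ι} (hab : T.Adj A B) {x y : V} (w : G.Walk x y) :
    ∀ (cx cy : ι), x ∈ X cx → y ∈ X cy →
      A ∈ (pth hT B cx).support → B ∈ (pth hT A cy).support →
      ∃ z ∈ w.support, z ∈ X A ∧ z ∈ X B := by
  induction w with
  | nil =>
    intro cx cy hx hy hA hB
    obtain ⟨h1, h2⟩ := cross hT hab hA hB
    refine ⟨_, SimpleGraph.Walk.start_mem_support _, ?_, ?_⟩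
    · have := hpaths cx cy (pth hT cx cy) (pth_isPath hT cx cy) A h1
        ⟨by simpa using hx, by simpa using hy⟩
      simpa using this
    · have := hpaths cx cy (pth hT cx cy) (pth_isPath hT cx cy) B h2
        ⟨by simpa using hx, by simpa using hy⟩
      simpa using this
  | @cons x u' y h q ih =>
    intro cx cy hx hy hA hB
    obtain ⟨e, he1, he2⟩ := hedges _ _ h
    rcases pth_tot hT hab e with hBe | hAe
    · obtain ⟨h1, h2⟩ := cross hT hab hA hBe
      refine ⟨x, by simp, ?_, ?_⟩
      · have := hpaths cx e (pth hT cx e) (pth_isPath hT cx e) A h1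
          ⟨by simpa using hx, by simpa using he1⟩
        simpa using this
      · have := hpaths cx e (pth hT cx e) (pth_isPath hT cx e) B h2
          ⟨by simpa using hx, by simpa using he1⟩
        simpa using this
    · obtain ⟨z, hz, hzz⟩ := ih e cy he2 hy hAe hB
      exact ⟨z, by simp [hz], hzz⟩

end TWAux
namespace TWAux

open SimpleGraph

variable {V : Type*} {G : SimpleGraph V}

lemma dist_split {x y z : V} (w : G.Walk x y) (hz : z ∈ w.support) :
    G.dist x z + G.dist z y ≤ w.length := by
  classical
  have hspec := w.take_spec hz
  have hlen : (w.takeUntil z hz).length + (w.dropUntil z hz).length = w.length := by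
    conv_rhs => rw [← hspec]
    rw [SimpleGraph.Walk.length_append]
  calc G.dist x z + G.dist z y
      ≤ (w.takeUntil z hz).length + (w.dropUntil z hz).length :=
        Nat.add_le_add (SimpleGraph.dist_le _) (SimpleGraph.dist_le _)
    _ = w.length := hlen

lemma getVert_mem_support' {x y : V} (w : G.Walk x y) (i : ℕ) :
    w.getVert i ∈ w.support := by
  induction w generalizing i with
  | nil => simp [SimpleGraph.Walk.getVert]
  | @cons a b c h q ih =>
    cases i with
    | zero => simp [SimpleGraph.Walk.getVert_zero]
    | succ n =>
      rw [SimpleGraph.Walk.getVert_cons_succ]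
      simp only [SimpleGraph.Walk.support_cons, List.mem_cons]
      exact Or.inr (ih n)

lemma dist_getVert_left (hconn : G.Connected) {x y : V} (w : G.Walk x y) (i : ℕ) :
    G.dist x (w.getVert i) ≤ i := by
  induction w generalizing i with
  | nil => simp [SimpleGraph.Walk.getVert, SimpleGraph.dist_self]
  | @cons a b c h q ih =>
    cases i with
    | zero => simp [SimpleGraph.Walk.getVert_zero, SimpleGraph.dist_self]
    | succ n =>
      have h1 : G.dist a b ≤ 1 := by
        have := SimpleGraph.dist_le (SimpleGraph.Walk.cons h SimpleGraph.Walk.nil)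
        simpa using this
      calc G.dist a ((SimpleGraph.Walk.cons h q).getVert (n+1))
          = G.dist a (q.getVert n) := by rw [SimpleGraph.Walk.getVert_cons_succ]
        _ ≤ G.dist a b + G.dist b (q.getVert n) := hconn.dist_triangle
        _ ≤ 1 + n := Nat.add_le_add h1 (ih n)
        _ = n + 1 := Nat.add_comm _ _

lemma dist_getVert_right {x y : V} (w : G.Walk x y) (i : ℕ) :
    G.dist (w.getVert i) y ≤ w.length - i := by
  induction w generalizing i with
  | nil => simp [SimpleGraph.Walk.getVert, SimpleGraph.dist_self]
  | @cons a b c h q ih =>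
    cases i with
    | zero =>
      simpa [SimpleGraph.Walk.getVert_zero] using
        SimpleGraph.dist_le (SimpleGraph.Walk.cons h q)
    | succ n =>
      rw [SimpleGraph.Walk.getVert_cons_succ]
      have := ih n
      calc G.dist (q.getVert n) c ≤ q.length - n := ih n
        _ ≤ (SimpleGraph.Walk.cons h q).length - (n+1) := by
            simp only [SimpleGraph.Walk.length_cons]
            omega

lemma midpoint (hconn : G.Connected) {x y : V} {R : ℕ} (hd : G.dist x y ≤ 2 * R) :
    ∃ z : V, G.dist x z ≤ R ∧ G.dist z y ≤ R := by
  obtain ⟨w, hw⟩ := hconn.exists_walk_length_eq_dist x y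
  refine ⟨w.getVert R, dist_getVert_left hconn w R, ?_⟩
  rcases le_or_gt w.length R with hle | hlt
  · rw [SimpleGraph.Walk.getVert_of_length_le w hle]
    simp [SimpleGraph.dist_self]
  · have := dist_getVert_right w R
    omega

end TWAux

open TWAux in
/-- If a connected simple graph `G` of diameter at most `2R` has a tree
decomposition of width at most `tw` (every bag has at most `tw + 1` vertices), then
there is a set `S` of at most `tw + 1` vertices such that every vertex of `G` is
within distance `R` of `S`. -/
theorem treewidth_ball_cover {V ι : Type*} (G : SimpleGraph V) (hG : G.Connected)
    (R tw : ℕ) (hdiam : ∀ u v : V, G.dist u v ≤ 2 * R)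
    (T : SimpleGraph ι) (hT : T.IsTree) (X : ι → Finset V)
    (hbags : ∀ v : V, ∃ a : ι, v ∈ X a)
    (hedges : ∀ u v : V, G.Adj u v → ∃ a : ι, u ∈ X a ∧ v ∈ X a)
    (hpaths : ∀ (a c : ι) (p : T.Walk a c), p.IsPath →
      ∀ b ∈ p.support, (X a : Set V) ∩ (X c : Set V) ⊆ (X b : Set V))
    (hwidth : ∀ a : ι, (X a).card ≤ tw + 1) :
    ∃ S : Finset V, S.card ≤ tw + 1 ∧ ∀ x : V, ∃ s ∈ S, G.dist x s ≤ R := by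
  classical
  by_contra hcon
  push_neg at hcon
  choose xf hxf using fun a : ι => hcon (X a) (hwidth a)
  choose cf hcf using fun a : ι => hbags (xf a)
  haveI : Nonempty ι := hT.isConnected.nonempty
  obtain ⟨a0⟩ := ‹Nonempty ι›
  -- far vertices are not in their own bags
  have hxnotin : ∀ a : ι, xf a ∉ X a := by
    intro a h
    have := hxf a (xf a) h
    simp [SimpleGraph.dist_self] at this
  have hcfne : ∀ a : ι, cf a ≠ a := by
    intro a h
    apply hxnotin a
    have := hcf a
    rw [h] at this
    exact this
  -- the pointer map
  have hnxt : ∀ a : ι, ∃ b, T.Adj a b ∧ b ∈ (pth hT a (cf a)).support ∧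
      a ∉ (pth hT b (cf a)).support := by
    intro a
    obtain ⟨b, hab, q, hq⟩ :=
      SimpleGraph.Walk.exists_eq_cons_of_ne (Ne.symm (hcfne a)) (pth hT a (cf a))
    have hip := pth_isPath hT a (cf a)
    rw [hq, SimpleGraph.Walk.cons_isPath_iff] at hip
    have hqe : q = pth hT b (cf a) := pth_eq hT q hip.1
    refine ⟨b, hab, ?_, ?_⟩
    · rw [hq]
      simp [SimpleGraph.Walk.support_cons]
    · rw [← hqe]
      exact hip.2
  choose nxt hnx1 hnx2 hnx3 using hnxt
  -- the ray
  let ar : ℕ → ι := fun n => Nat.rec a0 (fun _ d => nxt d) n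
  have har : ∀ n, ar (n + 1) = nxt (ar n) := fun n => rfl
  have hadjr : ∀ k, T.Adj (ar k) (ar (k + 1)) := fun k => hnx1 (ar k)
  have hmem2 : ∀ k, ar (k + 1) ∈ (pth hT (ar k) (cf (ar k))).support := fun k => hnx2 (ar k)
  -- no mutual pointing
  have hH : ∀ k : ℕ, (ar k) ∉ (pth hT (ar (k + 1)) (cf (ar (k + 1)))).support := by
    intro k hmem
    obtain ⟨w, hw⟩ := hG.exists_walk_length_eq_dist (xf (ar (k + 1))) (xf (ar k))
    obtain ⟨z, hzs, hz1, hz2⟩ := sep2 hT hpaths hedges (hadjr k) w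
      (cf (ar (k + 1))) (cf (ar k)) (hcf _) (hcf _) hmem (hmem2 k)
    have hs := dist_split w hzs
    rw [hw] at hs
    have d1 : R < G.dist (xf (ar (k + 1))) z := hxf _ z hz2
    have d2 : R < G.dist (xf (ar k)) z := hxf _ z hz1
    have d2' : G.dist z (xf (ar k)) = G.dist (xf (ar k)) z := SimpleGraph.dist_comm
    have hdd := hdiam (xf (ar (k + 1))) (xf (ar k))
    omega
  have hNB : ∀ k, ar (k + 2) ≠ ar k := by
    intro k h
    apply hH k
    rw [← h]
    exact hmem2 (k + 1)
  -- descending decomposition along the ray towards the bags of far vertices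
  have hDECaux : ∀ n d k, k + d = n →
      pth hT (ar k) (cf (ar n)) =
        SimpleGraph.Walk.cons (hadjr k) (pth hT (ar (k + 1)) (cf (ar n))) := by
    intro n d
    induction d with
    | zero =>
      intro k hk
      have hkn : k = n := by omega
      subst hkn
      exact pth_sv hT (hadjr k) (hmem2 k)
    | succ d ih =>
      intro k hk
      have ihk := ih (k + 1) (by omega)
      rcases pth_tot hT (hadjr k) (cf (ar n)) with h | h
      · exact pth_sv hT (hadjr k) h
      · exfalso
        have h2 := (pth_sv hT ((hadjr k).symm) h).symm.trans ihk
        have h3 := congrArg (fun wk => SimpleGraph.Walk.getVert wk 1) h2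
        simp only [SimpleGraph.Walk.getVert_cons_succ, SimpleGraph.Walk.getVert_zero] at h3
        exact hNB k h3.symm
  have hDEC : ∀ n k, k ≤ n →
      pth hT (ar k) (cf (ar n)) =
        SimpleGraph.Walk.cons (hadjr k) (pth hT (ar (k + 1)) (cf (ar n))) :=
    fun n k hk => hDECaux n (n - k) k (by omega)
  -- the ray-start sees every far bag beyond
  have hCHaux : ∀ n d k, k + d = n → ar n ∈ (pth hT (ar k) (cf (ar n))).support := by
    intro n d
    induction d with
    | zero =>
      intro k hk
      have hkn : k = n := by omega
      subst hkn
      exact SimpleGraph.Walk.start_mem_support _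
    | succ d ih =>
      intro k hk
      rw [hDEC n k (by omega)]
      simp only [SimpleGraph.Walk.support_cons, List.mem_cons]
      exact Or.inr (ih (k + 1) (by omega))
  have hCH : ∀ n, ar n ∈ (pth hT (ar 0) (cf (ar n))).support :=
    fun n => hCHaux n n 0 (by omega)
  -- the ray is a geodesic from its start
  have hWDEC : ∀ k, pth hT (ar (k + 1)) (ar 0) =
      SimpleGraph.Walk.cons ((hadjr k).symm) (pth hT (ar k) (ar 0)) := by
    intro k
    induction k with
    | zero =>
      exact pth_sv hT ((hadjr 0).symm) (SimpleGraph.Walk.end_mem_support _)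
    | succ k ih =>
      rcases pth_tot hT (hadjr (k + 1)) (ar 0) with h | h
      · exfalso
        have h2 := (pth_sv hT (hadjr (k + 1)) h).symm.trans ih
        have h3 := congrArg (fun wk => SimpleGraph.Walk.getVert wk 1) h2
        simp only [SimpleGraph.Walk.getVert_cons_succ, SimpleGraph.Walk.getVert_zero] at h3
        exact hNB k h3
      · exact pth_sv hT ((hadjr (k + 1)).symm) h
  -- lengths along the ray, injectivity
  have hLEN : ∀ k, (pth hT (ar k) (ar 0)).length = k := by
    intro k
    induction k with
    | zero => rw [pth_nil hT (ar 0)]; rfl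
    | succ k ih =>
      rw [hWDEC k, SimpleGraph.Walk.length_cons, ih]
  have hINJ : ∀ i j, ar i = ar j → i = j := by
    intro i j h
    have hi := hLEN i
    rw [h] at hi
    rw [hLEN j] at hi
    omega
  have hSEG : ∀ k i, i ≤ k → ar i ∈ (pth hT (ar k) (ar 0)).support := by
    intro k
    induction k with
    | zero =>
      intro i hi
      have : i = 0 := by omega
      subst this
      exact SimpleGraph.Walk.start_mem_support _
    | succ k ih =>
      intro i hi
      rw [hWDEC k]
      simp only [SimpleGraph.Walk.support_cons, List.mem_cons]
      rcases Nat.eq_or_lt_of_le hi with h | h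
      · exact Or.inl (by rw [h])
      · exact Or.inr (ih i (by omega))
  have hSEGMAX : ∀ k b, b ∈ (pth hT (ar k) (ar 0)).support → ∃ i, i ≤ k ∧ b = ar i := by
    intro k
    induction k with
    | zero =>
      intro b hb
      rw [pth_nil hT (ar 0)] at hb
      simp only [SimpleGraph.Walk.support_nil, List.mem_singleton] at hb
      exact ⟨0, le_refl _, hb⟩
    | succ k ih =>
      intro b hb
      rw [hWDEC k] at hb
      simp only [SimpleGraph.Walk.support_cons, List.mem_cons] at hb
      rcases hb with h | h
      · exact ⟨k + 1, le_refl _, h⟩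
      · obtain ⟨i, hi, hbi⟩ := ih b h
        exact ⟨i, by omega, hbi⟩
  have hLEN0 : ∀ m, (pth hT (ar 0) (ar m)).length = m := by
    intro m
    rw [pth_rev hT (ar m) (ar 0), SimpleGraph.Walk.length_reverse, hLEN m]
  -- Deep predicate facts
  have hDmono : ∀ (v : V) (m m' : ℕ), m' ≤ m →
      (∃ c, v ∈ X c ∧ ar m ∈ (pth hT (ar 0) c).support) →
      (∃ c, v ∈ X c ∧ ar m' ∈ (pth hT (ar 0) c).support) := by
    intro v m m' hm ⟨c, hvc, hmc⟩
    refine ⟨c, hvc, ?_⟩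
    rw [pth_decomp hT hmc, SimpleGraph.Walk.mem_support_append_iff]
    exact Or.inl (mem_pth_rev hT (hSEG m m' hm))
  have hDbnd : ∀ (c : ι) (m : ℕ), ar m ∈ (pth hT (ar 0) c).support →
      m ≤ (pth hT (ar 0) c).length := by
    intro c m hmc
    have hdc := pth_decomp hT hmc
    have := congrArg SimpleGraph.Walk.length hdc
    rw [SimpleGraph.Walk.length_append, hLEN0 m] at this
    omega
  -- F2 : bags of vertices close to a far vertex lie beyond that far vertex's ray node
  have hF2 : ∀ (k : ℕ) (v : V), G.dist (xf (ar k)) v ≤ R → ∀ c, v ∈ X c →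
      ar k ∈ (pth hT (ar 0) c).support := by
    intro k v hv c hvc
    have hnot : ar k ∉ (pth hT c (cf (ar k))).support := by
      intro hmem
      obtain ⟨w, hw⟩ := hG.exists_walk_length_eq_dist v (xf (ar k))
      obtain ⟨z, hzs, hz⟩ := sep1 hT hpaths hedges w c (cf (ar k)) hvc (hcf _) (ar k) hmem
      have hs := dist_split w hzs
      rw [hw] at hs
      have d1 : R < G.dist (xf (ar k)) z := hxf _ z hz
      have e1 : G.dist v (xf (ar k)) = G.dist (xf (ar k)) v := SimpleGraph.dist_comm
      have e2 : G.dist z (xf (ar k)) = G.dist (xf (ar k)) z := SimpleGraph.dist_comm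
      omega
    rcases pth_tri hT (hCH k) c with h | h
    · exact h
    · exact absurd h hnot
    -- case split: either every ball around a far vertex contains an "infinite reach" vertex,
  -- or some ball has only bounded-reach vertices
  rcases Classical.em (∀ k : ℕ, ∃ g : V, G.dist (xf (ar k)) g ≤ R ∧
      ∀ m : ℕ, ∃ c, g ∈ X c ∧ ar m ∈ (pth hT (ar 0) c).support) with hcase | hcase
  · -- infinite reach branch : produce tw+2 distinct vertices in one bag
    choose gf hg1 hg2 using hcase
    have hGIN : ∀ k : ℕ, ∃ P : ℕ, ∀ m, P < m → gf k ∈ X (ar m) := by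
      intro k
      obtain ⟨e, he⟩ := hbags (gf k)
      refine ⟨(pth hT (ar 0) e).length, ?_⟩
      intro m hm
      obtain ⟨c, hc1, hc2⟩ := hg2 k m
      have hnot : ar m ∉ (pth hT (ar 0) e).support := by
        intro hmem
        exact absurd (hDbnd e m hmem) (by omega)
      rcases pth_tri hT hc2 e with h | h
      · exact absurd h hnot
      · have := hpaths e c (pth hT e c) (pth_isPath hT e c) (ar m) h
          ⟨by simpa using he, by simpa using hc1⟩
        simpa using this
    choose Pf hPf using hGIN
    have hSERVE : ∀ j k : ℕ, G.dist (xf (ar k)) (gf j) ≤ R → k ≤ Pf j + 1 := by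
      intro j k hdist
      have hmem : gf j ∈ X (ar (Pf j + 1)) := hPf j (Pf j + 1) (by omega)
      have h2 := hF2 k (gf j) hdist (ar (Pf j + 1)) hmem
      have h3 := mem_pth_rev hT h2
      obtain ⟨i, hi, hbi⟩ := hSEGMAX (Pf j + 1) (ar k) h3
      have := hINJ k i hbi
      omega
    have hKT : ∃ K : ℕ → ℕ, K 0 = 0 ∧ ∀ j, K (j + 1) = max (K j) (Pf (K j)) + 2 :=
      ⟨fun j => Nat.rec 0 (fun _ Kj => max Kj (Pf Kj) + 2) j, rfl, fun j => rfl⟩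
    obtain ⟨K, hK0, hKS⟩ := hKT
    have hKmono : StrictMono K := strictMono_nat_of_lt_succ (by
      intro j
      rw [hKS j]
      omega)
    have hinj : ∀ i j, i < j → gf (K i) ≠ gf (K j) := by
      intro i j hij heq
      have hd := hg1 (K j)
      rw [← heq] at hd
      have h1 := hSERVE (K i) (K j) hd
      have h2 : K (i + 1) ≤ K j := hKmono.le_iff_le.mpr (by omega)
      rw [hKS i] at h2
      omega
    have hsub : (Finset.range (tw + 2)).image (fun j => gf (K j)) ⊆
        X (ar ((Finset.range (tw + 2)).sup (fun j => Pf (K j)) + 1)) := by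
      intro v hv
      simp only [Finset.mem_image, Finset.mem_range] at hv
      obtain ⟨j, hj, rfl⟩ := hv
      have hle : Pf (K j) ≤ (Finset.range (tw + 2)).sup (fun j => Pf (K j)) :=
        Finset.le_sup (f := fun j => Pf (K j)) (by simpa using hj)
      exact hPf (K j) ((Finset.range (tw + 2)).sup (fun j => Pf (K j)) + 1) (by omega)
    have hcard : ((Finset.range (tw + 2)).image (fun j => gf (K j))).card = tw + 2 := by
      rw [Finset.card_image_of_injOn, Finset.card_range]
      intro i hi j hj h
      simp only [Finset.coe_range, Set.mem_Iio] at hi hj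
      by_contra hne
      rcases Nat.lt_or_ge i j with hlt | hge
      · exact hinj i j hlt h
      · exact hinj j i (by omega) h.symm
    have hle := Finset.card_le_card hsub
    rw [hcard] at hle
    have := hwidth (ar ((Finset.range (tw + 2)).sup (fun j => Pf (K j)) + 1))
    omega
  · -- bounded reach branch : a short walk must cross R+2 disjoint bag levels
    push_neg at hcase
    obtain ⟨n, hn⟩ := hcase
    have hxnball : G.dist (xf (ar n)) (xf (ar n)) ≤ R := by
      simp [SimpleGraph.dist_self]
    have hrho : ∀ v : V, G.dist (xf (ar n)) v ≤ R → ∃ r : ℕ,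
        (∀ c, v ∈ X c → ar r ∉ (pth hT (ar 0) c).support) ∧
        (∀ m, (∃ c, v ∈ X c ∧ ar m ∈ (pth hT (ar 0) c).support) → m < r) := by
      classical
      intro v h
      obtain ⟨m0, hm0⟩ := hn v h
      have hex : ∃ m : ℕ, ∀ c, v ∈ X c → ar m ∉ (pth hT (ar 0) c).support := by
        refine ⟨m0, ?_⟩
        intro c hc hmem
        exact (hm0 c hc) hmem
      haveI : DecidablePred (fun m : ℕ => ∀ c, v ∈ X c → ar m ∉ (pth hT (ar 0) c).support) :=
        fun _ => Classical.propDecidable _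
      refine ⟨Nat.find hex, Nat.find_spec hex, ?_⟩
      intro m hD
      by_contra hge
      obtain ⟨c, hc1, hc2⟩ := hDmono v m (Nat.find hex) (by omega) hD
      exact (Nat.find_spec hex c hc1) hc2
    have hrhoT : ∃ rho : V → ℕ,
        (∀ v, G.dist (xf (ar n)) v ≤ R →
          ∀ c, v ∈ X c → ar (rho v) ∉ (pth hT (ar 0) c).support) ∧
        (∀ v, G.dist (xf (ar n)) v ≤ R →
          ∀ m, (∃ c, v ∈ X c ∧ ar m ∈ (pth hT (ar 0) c).support) → m < rho v) := by
      choose rhof h1 h2 using hrho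
      refine ⟨fun v => if h : G.dist (xf (ar n)) v ≤ R then rhof v h else 0, ?_, ?_⟩
      · intro v h c hc
        simp only [dif_pos h]
        exact h1 v h c hc
      · intro v h m hD
        simp only [dif_pos h]
        exact h2 v h m hD
    obtain ⟨rho, hrho1, hrho2⟩ := hrhoT
    have hlamT : ∃ lam : ℕ → ℕ, lam 0 = rho (xf (ar n)) ∧
        ∀ i, lam (i + 1) = max (lam i) ((X (ar (lam i))).sup rho) + 1 :=
      ⟨fun i => Nat.rec (rho (xf (ar n)))
        (fun _ l => max l ((X (ar l)).sup rho) + 1) i, rfl, fun i => rfl⟩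
    obtain ⟨lam, hlam0, hlamS⟩ := hlamT
    have hlamM : StrictMono lam := strictMono_nat_of_lt_succ (by
      intro i
      rw [hlamS i]
      omega)
    obtain ⟨y, hy1, hy2⟩ := midpoint hG (hdiam (xf (ar n)) (xf (ar (lam (R + 2)))))
    have hDy : ∀ i, i ≤ R + 2 →
        ∃ c, y ∈ X c ∧ ar (lam i) ∈ (pth hT (ar 0) c).support := by
      intro i hi
      obtain ⟨c, hc⟩ := hbags y
      have hdy : G.dist (xf (ar (lam (R + 2)))) y ≤ R := by
        rw [SimpleGraph.dist_comm]
        exact hy2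
      have hDm := hF2 (lam (R + 2)) y hdy c hc
      exact hDmono y (lam (R + 2)) (lam i) (hlamM.monotone hi) ⟨c, hc, hDm⟩
    have hnDxn : ∀ i, 1 ≤ i →
        ¬ (∃ c, (xf (ar n)) ∈ X c ∧ ar (lam i) ∈ (pth hT (ar 0) c).support) := by
      intro i hi hD
      have h1 := hrho2 (xf (ar n)) hxnball (lam i) hD
      have h2 : lam 0 < lam i := hlamM (by omega)
      omega
    obtain ⟨w, hwl⟩ := hG.exists_walk_length_eq_dist (xf (ar n)) y
    have hwR : w.length ≤ R := by
      rw [hwl]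
      exact hy1
    have hball : ∀ z ∈ w.support, G.dist (xf (ar n)) z ≤ R := by
      intro z hz
      have := dist_split w hz
      omega
    have hcov : ∀ (p q : V) (wk : G.Walk p q) (l : ℕ),
        ¬(∃ c, p ∈ X c ∧ ar l ∈ (pth hT (ar 0) c).support) →
        (∃ c, q ∈ X c ∧ ar l ∈ (pth hT (ar 0) c).support) →
        ∃ z, z ∈ wk.support ∧ z ∈ X (ar l) := by
      intro p q wk
      induction wk with
      | nil =>
        intro l h1 h2
        exact absurd h2 h1
      | @cons pp vv qq hadj q ih =>
        intro l h1 h2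
        rcases Classical.em (∃ c, vv ∈ X c ∧ ar l ∈ (pth hT (ar 0) c).support) with hD | hD
        · obtain ⟨e, he1, he2⟩ := hedges _ _ hadj
          obtain ⟨c, hc1, hc2⟩ := hD
          have hnot : ar l ∉ (pth hT (ar 0) e).support := fun hh => h1 ⟨e, he1, hh⟩
          rcases pth_tri hT hc2 e with hh | hh
          · exact absurd hh hnot
          · refine ⟨vv, ?_, ?_⟩
            · simp only [SimpleGraph.Walk.support_cons, List.mem_cons]
              exact Or.inr (SimpleGraph.Walk.start_mem_support q)
            · have := hpaths e c (pth hT e c) (pth_isPath hT e c) (ar l) hh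
                ⟨by simpa using he2, by simpa using hc1⟩
              simpa using this
        · obtain ⟨z, hz1, hz2⟩ := ih l hD h2
          refine ⟨z, ?_, hz2⟩
          simp only [SimpleGraph.Walk.support_cons, List.mem_cons]
          exact Or.inr hz1
    have hpick : ∀ i, i < R + 2 → ∃ z, z ∈ w.support ∧ z ∈ X (ar (lam (i + 1))) := by
      intro i hi
      exact hcov (xf (ar n)) y w (lam (i + 1)) (hnDxn (i + 1) (by omega))
        (hDy (i + 1) (by omega))
    have hvT : ∃ vf : ℕ → V, ∀ i, i < R + 2 →
        vf i ∈ w.support ∧ vf i ∈ X (ar (lam (i + 1))) := by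
      choose vfd h1 h2 using hpick
      refine ⟨fun i => if h : i < R + 2 then vfd i h else xf (ar n), ?_⟩
      intro i hi
      simp only [dif_pos hi]
      exact ⟨h1 i hi, h2 i hi⟩
    obtain ⟨vf, hvf⟩ := hvT
    have hlow : ∀ i, i < R + 2 → lam (i + 1) < rho (vf i) := by
      intro i hi
      have hb : G.dist (xf (ar n)) (vf i) ≤ R := hball _ (hvf i hi).1
      exact hrho2 (vf i) hb (lam (i + 1))
        ⟨ar (lam (i + 1)), (hvf i hi).2, SimpleGraph.Walk.end_mem_support _⟩
    have hhigh : ∀ i, i < R + 2 → rho (vf i) < lam (i + 2) := by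
      intro i hi
      have h1 : rho (vf i) ≤ (X (ar (lam (i + 1)))).sup rho :=
        Finset.le_sup (hvf i hi).2
      have h2 : lam (i + 2) = max (lam (i + 1)) ((X (ar (lam (i + 1)))).sup rho) + 1 :=
        hlamS (i + 1)
      omega
    have hvinj : ∀ i j, i < R + 2 → j < R + 2 → i < j → vf i ≠ vf j := by
      intro i j hi hj hij heq
      have l1 := hlow i hi
      have h1 := hhigh i hi
      have l2 := hlow j hj
      have hle : lam (i + 2) ≤ lam (j + 1) := hlamM.monotone (by omega)
      rw [heq] at h1
      omega
    have hvne : ∀ i, i < R + 2 → vf i ≠ xf (ar n) := by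
      intro i hi heq
      have l1 := hlow i hi
      rw [heq] at l1
      have h2 : lam 0 < lam (i + 1) := hlamM (by omega)
      omega
    have hsub : (Finset.range (R + 2)).image vf ⊆
        (w.support.toFinset.erase (xf (ar n))) := by
      intro z hz
      simp only [Finset.mem_image, Finset.mem_range] at hz
      obtain ⟨i, hi, rfl⟩ := hz
      rw [Finset.mem_erase]
      exact ⟨hvne i hi, List.mem_toFinset.mpr (hvf i hi).1⟩
    have hcard1 : ((Finset.range (R + 2)).image vf).card = R + 2 := by
      rw [Finset.card_image_of_injOn, Finset.card_range]
      intro i hi j hj h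
      simp only [Finset.coe_range, Set.mem_Iio] at hi hj
      by_contra hne
      rcases Nat.lt_or_ge i j with hlt | hge
      · exact hvinj i j hi hj hlt h
      · exact hvinj j i hj hi (by omega) h.symm
    have hxmem : xf (ar n) ∈ w.support.toFinset :=
      List.mem_toFinset.mpr (SimpleGraph.Walk.start_mem_support w)
    have hc2 : (w.support.toFinset.erase (xf (ar n))).card =
        w.support.toFinset.card - 1 := Finset.card_erase_of_mem hxmem
    have hc3 : w.support.toFinset.card ≤ w.support.length := List.toFinset_card_le _
    have hc4 : w.support.length = w.length + 1 := SimpleGraph.Walk.length_support w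
    have hc5 := Finset.card_le_card hsub
    rw [hcard1, hc2] at hc5
    omega
end
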